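/- arXiv:2506.11660 — 3 statements merged into one kernel-verified Lean document; each statement's English description precedes it below -/
import Mathlib

section
/- For any school choice problem with n students and n ordinary schools each of quota 1, in which every student ranks every ordinary school above the null school, every Pareto-efficient matching μ satisfies Σ_{i∈I} rk_i(μ(i)) ≤ n(n+1)/2. -/
open Finset in
lemma exists_cycle_perm_aux {I : Type} [Fintype I] [DecidableEq I]
    (g : I → I) (A : Finset I) (hA : ∀ i ∈ A, g i ∈ A)
    (x : I) (hx : x ∈ A) (p : ℕ) (hppos : 0 < p) (hcyc : g^[p] x = x) :
    ∃ (σ : I → I) (C : Finset I), Function.Bijective σ ∧ C.Nonempty ∧ C ⊆ A ∧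
      (∀ j ∈ C, σ j = g j) ∧ (∀ j ∉ C, σ j = j) := by
  have hxmem : ∀ t, g^[t] x ∈ A := by
    intro t; induction t with
    | zero => simpa
    | succ t ih => rw [Function.iterate_succ_apply' g t x]; exact hA _ ih
  set C : Finset I := (Finset.range p).image (fun t => g^[t] x) with hC
  have hCA : C ⊆ A := by
    intro j hj
    simp only [hC, mem_image, mem_range] at hj
    obtain ⟨t, _, rfl⟩ := hj; exact hxmem t
  have hgC : ∀ j ∈ C, g j ∈ C := by
    intro j hj
    simp only [hC, mem_image, mem_range] at hj ⊢
    obtain ⟨t, ht, rfl⟩ := hj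
    rcases eq_or_lt_of_le (Nat.succ_le_of_lt ht) with h | h
    · exact ⟨0, hppos, by
        rw [← Function.iterate_succ_apply' g t x, h, hcyc]; rfl⟩
    · exact ⟨t + 1, h, Function.iterate_succ_apply' g t x⟩
  have hCsub : C ⊆ C.image g := by
    intro j hj
    simp only [hC, mem_image, mem_range] at hj
    obtain ⟨t, ht, rfl⟩ := hj
    rcases Nat.eq_zero_or_pos t with rfl | htpos
    · refine mem_image.mpr ⟨g^[p-1] x, ?_, ?_⟩
      · exact mem_image.mpr ⟨p - 1, mem_range.mpr (by omega), rfl⟩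
      · rw [← Function.iterate_succ_apply' g (p-1) x, show (p-1).succ = p by omega, hcyc]; rfl
    · refine mem_image.mpr ⟨g^[t-1] x, ?_, ?_⟩
      · exact mem_image.mpr ⟨t - 1, mem_range.mpr (by omega), rfl⟩
      · rw [← Function.iterate_succ_apply' g (t-1) x]; congr 1; omega
  have himg : C.image g = C := by
    apply Finset.eq_of_subset_of_card_le
    · intro j hj; obtain ⟨k, hk, rfl⟩ := mem_image.mp hj; exact hgC k hk
    · exact card_le_card hCsub
  have hinjOn : Set.InjOn g C := Finset.injOn_of_card_image_eq (by rw [himg])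
  set σ : I → I := fun j => if j ∈ C then g j else j with hσ
  have hσC : ∀ j, (σ j ∈ C ↔ j ∈ C) := by
    intro j
    by_cases h : j ∈ C
    · have hh : σ j = g j := if_pos h
      rw [hh]; exact ⟨fun _ => h, fun _ => hgC j h⟩
    · have hh : σ j = j := if_neg h
      rw [hh]
  have hσinj : Function.Injective σ := by
    intro j k hjk
    by_cases hj : j ∈ C <;> by_cases hk : k ∈ C
    · simp only [hσ, if_pos hj, if_pos hk] at hjk
      exact hinjOn (Finset.mem_coe.mpr hj) (Finset.mem_coe.mpr hk) hjk
    · exfalso; exact hk (((hσC k).mp (hjk ▸ (hσC j).mpr hj)))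
    · exfalso; exact hj (((hσC j).mp (hjk ▸ (hσC k).mpr hk)))
    · simpa [hσ, if_neg hj, if_neg hk] using hjk
  refine ⟨σ, C, Finite.injective_iff_bijective.mp hσinj, ?_, hCA, ?_, ?_⟩
  · exact ⟨x, mem_image.mpr ⟨0, mem_range.mpr hppos, rfl⟩⟩
  · intro j hj; simp only [hσ, if_pos hj]
  · intro j hj; simp only [hσ, if_neg hj]

open Finset in
lemma exists_cycle_perm {I : Type} [Fintype I] [DecidableEq I]
    (g : I → I) (A : Finset I) (hA : ∀ i ∈ A, g i ∈ A)
    (i₀ : I) (hi₀ : i₀ ∈ A) :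
    ∃ (σ : I → I) (C : Finset I), Function.Bijective σ ∧ C.Nonempty ∧ C ⊆ A ∧
      (∀ j ∈ C, σ j = g j) ∧ (∀ j ∉ C, σ j = j) := by
  have hmem : ∀ t, g^[t] i₀ ∈ A := by
    intro t; induction t with
    | zero => simpa
    | succ t ih => rw [Function.iterate_succ_apply' g t i₀]; exact hA _ ih
  have hninj : ¬ Function.Injective (fun t : Fin (Fintype.card I + 1) => g^[t] i₀) := by
    intro h
    have := Fintype.card_le_of_injective _ h
    simp at this
  simp only [Function.Injective, not_forall] at hninj
  obtain ⟨a', b', hab', hne⟩ := hninj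
  obtain ⟨a, b, hlt, hab⟩ : ∃ a b : ℕ, a < b ∧ g^[a] i₀ = g^[b] i₀ := by
    rcases lt_or_gt_of_ne (fun h => hne (Fin.ext h)) with h | h
    · exact ⟨a', b', h, hab'⟩
    · exact ⟨b', a', h, hab'.symm⟩
  have hcyc : g^[b - a] (g^[a] i₀) = g^[a] i₀ := by
    rw [← Function.iterate_add_apply, show b - a + a = b by omega]
    exact hab.symm
  exact exists_cycle_perm_aux g A hA _ (hmem a) (b - a) (by omega) hcyc


open Finset in
lemma filter_comp_bij_card {I S : Type} [Fintype I] [DecidableEq I] [DecidableEq S]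
    (μ : I → S) (σ : I → I) (hσ : Function.Bijective σ) (s : S) :
    (Finset.univ.filter fun i => μ (σ i) = s).card
      = (Finset.univ.filter fun i => μ i = s).card := by
  set e := Equiv.ofBijective σ hσ with he
  have heq : (Finset.univ.filter fun i => μ (σ i) = s)
      = (Finset.univ.filter fun i => μ i = s).image e.symm := by
    ext i
    simp only [Finset.mem_filter, Finset.mem_image, Finset.mem_univ, true_and]
    constructor
    · intro h
      exact ⟨σ i, h, e.symm_apply_apply i⟩
    · rintro ⟨j, hj, rfl⟩
      have : σ (e.symm j) = j := e.apply_symm_apply j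
      rwa [this]
  rw [heq, Finset.card_image_of_injective _ e.symm.injective]



/-!
A school choice problem: finitely many students `I` and schools `S`
(with a distinguished null school of quota `|I|`).  Each student `i` has a
strict preference over schools represented by its rank function
`rk i : S → ℕ` (a bijection onto `{1, …, |S|}`, where rank 1 is the most
preferred school); each school `s` has a quota `quota s ≥ 1` and a strict
priority over students represented by `prio s : I → ℕ`
(`i ▷_s j` iff `prio s i < prio s j`).
-/
structure SchoolChoice (I S : Type) [Fintype I] [Fintype S]
    [DecidableEq I] [DecidableEq S] where
  nullSchool : S
  quota : S → ℕ
  rk : I → S → ℕ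
  prio : S → I → ℕ
  quota_pos : ∀ s : S, 1 ≤ quota s
  quota_null : quota nullSchool = Fintype.card I
  rk_inj : ∀ i : I, Function.Injective (rk i)
  rk_mem : ∀ (i : I) (s : S), rk i s ∈ Finset.Icc 1 (Fintype.card S)
  prio_inj : ∀ s : S, Function.Injective (prio s)

namespace SchoolChoice

open scoped Classical

variable {I S : Type} [Fintype I] [Fintype S] [DecidableEq I] [DecidableEq S]

/-- `μ` is a matching: no school is assigned more students than its quota. -/
def IsMatching (P : SchoolChoice I S) (μ : I → S) : Prop :=
  ∀ s : S, (Finset.univ.filter fun i => μ i = s).card ≤ P.quota s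

/-- Given the sets `R i` of schools that have rejected student `i` so far,
student `i` proposes to her most preferred school that has not rejected her. -/
noncomputable def propose (P : SchoolChoice I S) (R : I → Finset S) (i : I) : S :=
  if h : (Finset.univ \ R i).Nonempty then
    (Finset.exists_min_image (Finset.univ \ R i) (P.rk i) h).choose
  else P.nullSchool

/-- At the DA round with rejection state `R`, school `s` rejects student `i`:
`i` applies to `s` and at least `quota s` applicants to `s` have higher priority. -/
def rejectsAt (P : SchoolChoice I S) (R : I → Finset S) (s : S) (i : I) : Prop :=
  P.propose R i = s ∧
    P.quota s ≤ (Finset.univ.filter fun j =>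
      P.propose R j = s ∧ P.prio s j < P.prio s i).card

/-- One round of student-proposing Deferred Acceptance: record new rejections. -/
noncomputable def stepR (P : SchoolChoice I S) (R : I → Finset S) : I → Finset S :=
  fun i => R i ∪ (Finset.univ.filter fun s => P.rejectsAt R s i)

/-- Rejection state after `n` rounds of Deferred Acceptance. -/
noncomputable def daR (P : SchoolChoice I S) : ℕ → I → Finset S
  | 0 => fun _ => (∅ : Finset S)
  | n + 1 => P.stepR (P.daR n)

/-- The outcome of the student-proposing Deferred Acceptance algorithm:
iterate rounds until no rejection occurs (which happens within
`|I|·|S| + 1` rounds); each student is matched to the school holding her. -/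
noncomputable def DA (P : SchoolChoice I S) : I → S :=
  P.propose (P.daR (Fintype.card I * Fintype.card S + 1))

/-- A matching `ν` is stable-dominating if every student weakly prefers
`ν` to the DA outcome. -/
def StableDominating (P : SchoolChoice I S) (ν : I → S) : Prop :=
  P.IsMatching ν ∧ ∀ i : I, P.rk i (ν i) ≤ P.rk i (P.DA i)

/-- Student `i` is unimprovable: every stable-dominating matching assigns `i`
to her DA school. -/
def Unimprovable (P : SchoolChoice I S) (i : I) : Prop :=
  ∀ ν : I → S, P.StableDominating ν → ν i = P.DA i

/-- Edge of the envy digraph `G^DA(P)`: `i` prefers `j`'s DA school to her own. -/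
def Envy (P : SchoolChoice I S) (i j : I) : Prop :=
  P.rk i (P.DA j) < P.rk i (P.DA i)

/-- Student `i` lies on a directed cycle of the envy digraph `G^DA(P)`. -/
def OnCycle (P : SchoolChoice I S) (i : I) : Prop :=
  ∃ (m : ℕ) (c : ℕ → I), 0 < m ∧ c 0 = i ∧ c m = i ∧
    ∀ k < m, P.Envy (c k) (c (k + 1))

/-- Student `i` desires school `s` in matching `μ`. -/
def Desires (P : SchoolChoice I S) (μ : I → S) (i : I) (s : S) : Prop :=
  P.rk i s < P.rk i (μ i)

/-- `μ` is non-wasteful: every desired school is filled to quota. -/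
def NonWasteful (P : SchoolChoice I S) (μ : I → S) : Prop :=
  ∀ s : S, (∃ i : I, P.Desires μ i s) →
    (Finset.univ.filter fun i => μ i = s).card = P.quota s

/-- `μ` is stable: a non-wasteful matching with no priority violations. -/
def Stable (P : SchoolChoice I S) (μ : I → S) : Prop :=
  P.IsMatching μ ∧ P.NonWasteful μ ∧
    ¬ ∃ (i j : I) (s : S), P.Desires μ i s ∧ μ j = s ∧ P.prio s i < P.prio s j

/-- `μ` Pareto-dominates `ν`. -/
def ParetoDominates (P : SchoolChoice I S) (μ ν : I → S) : Prop :=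
  (∀ i : I, P.rk i (μ i) ≤ P.rk i (ν i)) ∧ ∃ i : I, P.rk i (μ i) < P.rk i (ν i)

/-- `μ` is a Pareto-efficient matching. -/
def ParetoEfficient (P : SchoolChoice I S) (μ : I → S) : Prop :=
  P.IsMatching μ ∧ ∀ ν : I → S, P.IsMatching ν → ¬ P.ParetoDominates ν μ

end SchoolChoice

/-- In a school choice problem with `n` students and `n`
ordinary schools of quota 1, where every student ranks every ordinary school
above the null school, every Pareto-efficient matching `μ` satisfies
`Σ_i rk_i(μ i) ≤ n(n+1)/2`. -/
theorem paretoEfficient_rank_sum_bound {I S : Type} [Fintype I] [Fintype S]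
    [DecidableEq I] [DecidableEq S] (P : SchoolChoice I S) (n : ℕ)
    (hI : Fintype.card I = n) (hS : Fintype.card S = n + 1)
    (hquota : ∀ s : S, s ≠ P.nullSchool → P.quota s = 1)
    (hrk : ∀ i : I, P.rk i P.nullSchool = n + 1)
    (μ : I → S) (hμ : P.ParetoEfficient μ) :
    (∑ i : I, P.rk i (μ i)) ≤ n * (n + 1) / 2 := by
  classical
  obtain ⟨hM, hPO⟩ := hμ
  set N := P.nullSchool with hN
  -- rank bound for ordinary schools
  have hrk_le : ∀ (i : I) (s : S), s ≠ N → P.rk i s ≤ n := by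
    intro i s hs
    have h1 := P.rk_mem i s
    rw [Finset.mem_Icc, hS] at h1
    rcases eq_or_lt_of_le h1.2 with h | h
    · exact absurd (P.rk_inj i (h.trans (hrk i).symm)) hs
    · omega
  -- every student is assigned an ordinary school
  have stepA : ∀ i : I, μ i ≠ N := by
    intro i₀ h₀
    have key : ∀ s : S, s ≠ N → ∃ j, μ j = s := by
      intro s hs
      by_contra hno
      push_neg at hno
      set ν := Function.update μ i₀ s with hν
      have hν₀ : ν i₀ = s := Function.update_self i₀ s μ
      have hνother : ∀ j, j ≠ i₀ → ν j = μ j := fun j hj =>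
        Function.update_of_ne hj s μ
      have hνM : P.IsMatching ν := by
        intro t
        by_cases hts : t = s
        · subst hts
          have : (Finset.univ.filter fun j => ν j = t) = {i₀} := by
            ext j
            simp only [Finset.mem_filter, Finset.mem_univ, true_and,
              Finset.mem_singleton]
            constructor
            · intro hj
              by_contra hne
              exact hno j (by rw [← hνother j hne]; exact hj)
            · rintro rfl; exact hν₀
          rw [this, Finset.card_singleton]
          exact P.quota_pos t
        · refine le_trans (Finset.card_le_card ?_) (hM t)
          intro j hj
          simp only [Finset.mem_filter, Finset.mem_univ, true_and] at hj ⊢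
          rcases eq_or_ne j i₀ with rfl | hne
          · exact absurd (hν₀ ▸ hj : s = t) (Ne.symm hts)
          · rw [← hνother j hne]; exact hj
      have hdom : P.ParetoDominates ν μ := by
        have hstrict : P.rk i₀ (ν i₀) < P.rk i₀ (μ i₀) := by
          rw [hν₀, h₀, hrk i₀]
          have := hrk_le i₀ s hs
          omega
        refine ⟨fun j => ?_, i₀, hstrict⟩
        rcases eq_or_ne j i₀ with rfl | hne
        · exact le_of_lt hstrict
        · rw [hνother j hne]
      exact hPO ν hνM hdom
    have hsum : (Finset.univ : Finset I).card
        = ∑ s : S, (Finset.univ.filter fun i => μ i = s).card :=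
      Finset.card_eq_sum_card_fiberwise (fun i _ => Finset.mem_univ (μ i))
    have hpos : ∀ s : S, 1 ≤ (Finset.univ.filter fun i => μ i = s).card := by
      intro s
      rcases eq_or_ne s N with rfl | hs
      · exact Finset.card_pos.mpr ⟨i₀, Finset.mem_filter.mpr ⟨Finset.mem_univ _, h₀⟩⟩
      · obtain ⟨j, hj⟩ := key s hs
        exact Finset.card_pos.mpr ⟨j, Finset.mem_filter.mpr ⟨Finset.mem_univ _, hj⟩⟩
    have h1 : (∑ s : S, 1) ≤ ∑ s : S, (Finset.univ.filter fun i => μ i = s).card :=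
      Finset.sum_le_sum (fun s _ => hpos s)
    have h2 : (∑ s : S, (1 : ℕ)) = n + 1 := by
      simp [Finset.card_univ, hS]
    have h3 : (Finset.univ : Finset I).card = n := by rw [Finset.card_univ, hI]
    omega
  -- μ is injective
  have stepB : Function.Injective μ := by
    intro i j hij
    by_contra hne
    have hsN : μ i ≠ N := stepA i
    have hsub : {i, j} ⊆ Finset.univ.filter fun k => μ k = μ i := by
      intro k hk
      simp only [Finset.mem_insert, Finset.mem_singleton] at hk
      rcases hk with rfl | rfl
      · exact Finset.mem_filter.mpr ⟨Finset.mem_univ _, rfl⟩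
      · exact Finset.mem_filter.mpr ⟨Finset.mem_univ _, hij.symm⟩
    have h2 : 2 ≤ (Finset.univ.filter fun k => μ k = μ i).card := by
      have : ({i, j} : Finset I).card = 2 := Finset.card_pair hne
      rw [← this]
      exact Finset.card_le_card hsub
    have := hM (μ i)
    rw [hquota (μ i) hsN] at this
    omega
  -- for each m ≤ n, at least m students have rank ≤ m
  have stepC : ∀ m : ℕ, m ≤ n →
      m ≤ (Finset.univ.filter fun i => P.rk i (μ i) ≤ m).card := by
    intro m hm
    by_contra hlt
    push_neg at hlt
    set F := Finset.univ.filter fun i => P.rk i (μ i) ≤ m with hF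
    set A := Finset.univ.filter fun i => ¬ P.rk i (μ i) ≤ m with hA
    have hFA : F.card + A.card = n := by
      rw [hF, hA, Finset.card_filter_add_card_filter_not,
        Finset.card_univ, hI]
    have hAmem : ∀ i, i ∈ A ↔ m < P.rk i (μ i) := by
      intro i
      simp only [hA, Finset.mem_filter, Finset.mem_univ, true_and, not_le]
    have subclaim : ∀ i ∈ A, ∃ j ∈ A, P.rk i (μ j) ≤ m := by
      intro i hi
      by_contra hno
      push_neg at hno
      have himg : A.image (fun j => P.rk i (μ j)) ⊆ Finset.Icc (m+1) n := by
        intro v hv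
        obtain ⟨j, hj, rfl⟩ := Finset.mem_image.mp hv
        rw [Finset.mem_Icc]
        exact ⟨hno j hj, hrk_le i (μ j) (stepA j)⟩
      have hinj : Set.InjOn (fun j => P.rk i (μ j)) A := by
        intro j hj k hk hjk
        exact stepB (P.rk_inj i hjk)
      have hcard : A.card = (A.image (fun j => P.rk i (μ j))).card :=
        (Finset.card_image_of_injOn hinj).symm
      have h4 : (A.image (fun j => P.rk i (μ j))).card ≤ n - m := by
        have := Finset.card_le_card himg
        rwa [Nat.card_Icc, show n + 1 - (m + 1) = n - m by omega] at this
      omega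
    have hAne : A.Nonempty := by
      rw [← Finset.card_pos]; omega
    obtain ⟨i₀, hi₀⟩ := hAne
    set g : I → I := fun i => if h : i ∈ A then (subclaim i h).choose else i with hg
    have hg1 : ∀ i ∈ A, g i ∈ A := by
      intro i hi
      have : g i = (subclaim i hi).choose := dif_pos hi
      rw [this]
      exact (subclaim i hi).choose_spec.1
    have hg2 : ∀ i ∈ A, P.rk i (μ (g i)) ≤ m := by
      intro i hi
      have : g i = (subclaim i hi).choose := dif_pos hi
      rw [this]
      exact (subclaim i hi).choose_spec.2
    obtain ⟨σ, C, hbij, hCne, hCA, hσ1, hσ2⟩ := exists_cycle_perm g A hg1 i₀ hi₀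
    have hstrict : ∀ j ∈ C, P.rk j (μ (σ j)) < P.rk j (μ j) := by
      intro j hj
      rw [hσ1 j hj]
      have hjA := hCA hj
      exact lt_of_le_of_lt (hg2 j hjA) ((hAmem j).mp hjA)
    have hνM : P.IsMatching (fun i => μ (σ i)) := by
      intro s
      rw [filter_comp_bij_card μ σ hbij s]
      exact hM s
    have hdom : P.ParetoDominates (fun i => μ (σ i)) μ := by
      constructor
      · intro j
        by_cases hj : j ∈ C
        · exact le_of_lt (hstrict j hj)
        · show P.rk j (μ (σ j)) ≤ P.rk j (μ j)
          rw [hσ2 j hj]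
      · obtain ⟨j, hj⟩ := hCne
        exact ⟨j, hstrict j hj⟩
    exact hPO _ hνM hdom
  -- final counting
  have hub : ∀ i, P.rk i (μ i) ≤ n := fun i => hrk_le i (μ i) (stepA i)
  have key : (∑ i : I, P.rk i (μ i))
      = ∑ m ∈ Finset.range n, (Finset.univ.filter fun i => ¬ P.rk i (μ i) ≤ m).card := by
    have h1 : ∀ i : I, P.rk i (μ i)
        = ∑ m ∈ Finset.range n, if ¬ P.rk i (μ i) ≤ m then 1 else 0 := by
      intro i
      rw [← Finset.card_filter]
      have : (Finset.range n).filter (fun m => ¬ P.rk i (μ i) ≤ m)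
          = Finset.range (P.rk i (μ i)) := by
        ext v
        simp only [Finset.mem_filter, Finset.mem_range, not_le]
        have := hub i
        omega
      rw [this, Finset.card_range]
    calc (∑ i : I, P.rk i (μ i))
        = ∑ i : I, ∑ m ∈ Finset.range n, if ¬ P.rk i (μ i) ≤ m then 1 else 0 :=
          Finset.sum_congr rfl (fun i _ => h1 i)
      _ = ∑ m ∈ Finset.range n, ∑ i : I, if ¬ P.rk i (μ i) ≤ m then 1 else 0 :=
          Finset.sum_comm
      _ = ∑ m ∈ Finset.range n, (Finset.univ.filter fun i => ¬ P.rk i (μ i) ≤ m).card :=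
          Finset.sum_congr rfl (fun m _ => (Finset.card_filter _ _).symm)
  have hbound : (∑ i : I, P.rk i (μ i)) ≤ ∑ m ∈ Finset.range n, (n - m) := by
    rw [key]
    apply Finset.sum_le_sum
    intro m hm
    rw [Finset.mem_range] at hm
    have hC := stepC m (le_of_lt hm)
    have hFA : (Finset.univ.filter fun i => P.rk i (μ i) ≤ m).card
        + (Finset.univ.filter fun i => ¬ P.rk i (μ i) ≤ m).card = n := by
      rw [Finset.card_filter_add_card_filter_not, Finset.card_univ, hI]
    omega
  have hgauss : (∑ m ∈ Finset.range n, (n - m)) * 2 = n * (n + 1) := by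
    have hrefl : (∑ m ∈ Finset.range n, (n - m)) = ∑ m ∈ Finset.range n, (m + 1) := by
      rw [← Finset.sum_range_reflect (fun j => j + 1) n]
      apply Finset.sum_congr rfl
      intro m hm
      rw [Finset.mem_range] at hm
      omega
    have h5 : (∑ m ∈ Finset.range n, (m + 1)) = ∑ m ∈ Finset.range (n + 1), m := by
      rw [Finset.sum_range_succ' (fun m => m) n]
      simp
    rw [hrefl, h5, Finset.sum_range_id_mul_two]
    simp [Nat.mul_comm]
  rw [Nat.le_div_iff_mul_le (by norm_num : 0 < 2)]
  calc (∑ i : I, P.rk i (μ i)) * 2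
      ≤ (∑ m ∈ Finset.range n, (n - m)) * 2 := Nat.mul_le_mul_right 2 hbound
    _ = n * (n + 1) := hgauss
end

section
/- In any school choice problem with advantaged and marginalized students, there exists at least one marginalized student z ∈ Z who is unimprovable: every stable-dominating matching ν satisfies ν(z) = DA_z(P). -/
/-! Let `z` be the marginalized student whose last rejection in DA comes latest. If a
stable-dominating matching moved `z`, then, since every school that gains students is full
under DA, some student enters `z`'s DA school `s`, so `s` rejects someone during DA. Whoever `s`
rejects ranks below `z` at `s`, hence is marginalized and was rejected no later than `z`'s last
rejection. After the last round `a` in which `s` rejects anyone, its best `quota s` applicants of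
round `a` keep their seats for good, so they are exactly its DA students: `z` applied to `s` at
round `a`. But until her last rejection `z` applies only to schools she prefers to `s`. -/

namespace Finset

lemma le_card_filter_card_lt {α β : Type*} [LinearOrder β] {A : Finset α} {f : α → β}
    (hf : Set.InjOn f A) {q : ℕ} (hq : q ≤ #A) :
    q ≤ #{j ∈ A | #{k ∈ A | f k < f j} < q} := by
  set r : α → ℕ := fun j => #{k ∈ A | f k < f j}
  have hr_lt : ∀ j ∈ A, r j < #A := fun j hj =>
    card_lt_card ⟨filter_subset _ _, fun h => (mem_filter.1 (h hj)).2.false⟩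
  have hr_mono : ∀ j ∈ A, ∀ j', f j < f j' → r j < r j' := fun j hj j' hlt => by
    refine card_lt_card ((ssubset_iff_of_subset fun k hk => ?_).2
      ⟨j, mem_filter.2 ⟨hj, hlt⟩, fun h => (mem_filter.1 h).2.false⟩)
    exact mem_filter.2 ⟨(mem_filter.1 hk).1, (mem_filter.1 hk).2.trans hlt⟩
  have hr_inj : Set.InjOn r A := fun j hj j' hj' h => by
    by_contra hne
    rcases lt_or_gt_of_ne (hf.ne hj hj' hne) with hlt | hlt
    · exact (hr_mono j hj j' hlt).ne h
    · exact (hr_mono j' hj' j hlt).ne' h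
  have hbad : #{j ∈ A | ¬ r j < q} ≤ #A - q := by
    simpa using card_le_card_of_injOn r (t := Ico q #A)
      (fun j hj => mem_Ico.2 ⟨not_lt.1 (mem_filter.1 hj).2, hr_lt j (mem_filter.1 hj).1⟩)
      (hr_inj.mono (filter_subset _ _))
  have := card_filter_add_card_filter_not (s := A) fun j => r j < q
  change q ≤ #{j ∈ A | r j < q}
  omega

end Finset

namespace SchoolChoice

open Finset
open scoped Classical

variable {I S : Type} [Fintype I] [Fintype S] [DecidableEq I] [DecidableEq S]
  (P : SchoolChoice I S)

lemma propose_congr {R R' : I → Finset S} {i : I} (h : R i = R' i) :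
    P.propose R i = P.propose R' i := by
  simp only [propose, h]

lemma propose_notMem {R : I → Finset S} {i : I} {s : S} (hs : s ∉ R i) :
    P.propose R i ∉ R i := by
  have h : (univ \ R i).Nonempty := ⟨s, mem_sdiff.2 ⟨mem_univ _, hs⟩⟩
  rw [propose, dif_pos h]
  exact (mem_sdiff.1 (exists_min_image _ _ h).choose_spec.1).2

lemma rk_propose_le {R : I → Finset S} {i : I} {s : S} (hs : s ∉ R i) :
    P.rk i (P.propose R i) ≤ P.rk i s := by
  have h : (univ \ R i).Nonempty := ⟨s, mem_sdiff.2 ⟨mem_univ _, hs⟩⟩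
  rw [propose, dif_pos h]
  exact (exists_min_image _ _ h).choose_spec.2 s (mem_sdiff.2 ⟨mem_univ _, hs⟩)

lemma not_rejectsAt_nullSchool (R : I → Finset S) (i : I) :
    ¬ P.rejectsAt R P.nullSchool i := by
  rintro ⟨-, hcard⟩
  rw [P.quota_null] at hcard
  exact hcard.not_gt (card_lt_univ_of_notMem (x := i) (by simp))

lemma nullSchool_notMem_daR (n : ℕ) (i : I) : P.nullSchool ∉ P.daR n i := by
  induction n with
  | zero => simp [daR]
  | succ n ih =>
    simp only [daR, stepR, mem_union, mem_filter, mem_univ, true_and, not_or]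
    exact ⟨ih, P.not_rejectsAt_nullSchool _ i⟩

lemma propose_daR_notMem (n : ℕ) (i : I) : P.propose (P.daR n) i ∉ P.daR n i :=
  P.propose_notMem (P.nullSchool_notMem_daR n i)

lemma daR_mono : Monotone P.daR :=
  monotone_nat_of_le_succ fun _ _ => subset_union_left

lemma rk_propose_daR_mono (i : I) : Monotone fun n => P.rk i (P.propose (P.daR n) i) :=
  fun _ m hnm => P.rk_propose_le fun h => P.propose_daR_notMem m i (P.daR_mono hnm i h)

lemma mem_daR_iff {m : ℕ} {s : S} {i : I} :
    s ∈ P.daR m i ↔ ∃ n < m, P.rejectsAt (P.daR n) s i := by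
  induction m with
  | zero => simp [daR]
  | succ m ih =>
    simp only [daR, stepR, mem_union, mem_filter, mem_univ, true_and, ih]
    constructor
    · rintro (⟨n, hn, h⟩ | h)
      exacts [⟨n, by omega, h⟩, ⟨m, by omega, h⟩]
    · rintro ⟨n, hn, h⟩
      rcases Nat.lt_succ_iff_lt_or_eq.1 hn with hn | rfl
      exacts [Or.inl ⟨n, hn, h⟩, Or.inr h]

lemma propose_daR_succ_of_not_rejectsAt {n : ℕ} {i : I}
    (h : ¬ P.rejectsAt (P.daR n) (P.propose (P.daR n) i) i) :
    P.propose (P.daR (n + 1)) i = P.propose (P.daR n) i := by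
  refine P.propose_congr (union_eq_left.2 fun s hs => ?_)
  obtain ⟨-, hrej⟩ := mem_filter.1 hs
  exact absurd (hrej.1 ▸ hrej) h

abbrev daRounds (I S : Type) [Fintype I] [Fintype S] : ℕ :=
  Fintype.card I * Fintype.card S + 1

/-- Every round that changes the rejection state adds a rejection, and there are at most
`|I|·|S|` of them. -/
lemma exists_daR_succ_eq : ∃ n < daRounds I S, P.daR (n + 1) = P.daR n := by
  by_contra! hne
  let total : ℕ → ℕ := fun n => ∑ i, #(P.daR n i)
  have hstep : ∀ n < daRounds I S, total n < total (n + 1) := fun n hn => by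
    obtain ⟨i, hi⟩ := Function.ne_iff.1 (hne n hn)
    exact sum_lt_sum (fun j _ => card_le_card (P.daR_mono n.le_succ j))
      ⟨i, mem_univ i, card_lt_card ((P.daR_mono n.le_succ i).ssubset_of_ne (Ne.symm hi))⟩
  have hgrow : ∀ n ≤ daRounds I S, n ≤ total n := fun n hn => by
    induction n with
    | zero => exact Nat.zero_le _
    | succ n ih => exact (ih (by omega)).trans_lt (hstep n (by omega))
  have hbound : total (daRounds I S) ≤ Fintype.card I * Fintype.card S := by
    simpa using sum_le_card_nsmul univ _ _ fun i _ => card_le_univ (P.daR (daRounds I S) i)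
  have hd : daRounds I S = Fintype.card I * Fintype.card S + 1 := rfl
  have := hgrow _ le_rfl
  omega

lemma daR_eq_of_daRounds_le {m : ℕ} (hm : daRounds I S ≤ m) :
    P.daR m = P.daR (daRounds I S) := by
  obtain ⟨n, hn, hfix⟩ := P.exists_daR_succ_eq
  have hconst : ∀ m, n ≤ m → P.daR m = P.daR n := fun m hm => by
    induction m, hm using Nat.le_induction with
    | base => rfl
    | succ m _ ih => exact (congrArg P.stepR ih).trans hfix
  rw [hconst m (by omega), hconst _ hn.le]

lemma propose_daR_eq_DA {m : ℕ} (hm : daRounds I S ≤ m) (i : I) :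
    P.propose (P.daR m) i = P.DA i := by
  rw [P.daR_eq_of_daRounds_le hm]
  rfl

lemma lt_daRounds_of_rejectsAt {n : ℕ} {s : S} {i : I} (h : P.rejectsAt (P.daR n) s i) :
    n < daRounds I S := by
  by_contra! hn
  have hmem : s ∈ P.daR (n + 1) i := P.mem_daR_iff.2 ⟨n, n.lt_succ_self, h⟩
  rw [P.daR_eq_of_daRounds_le (by omega), ← P.daR_eq_of_daRounds_le hn] at hmem
  exact P.propose_daR_notMem n i (h.1 ▸ hmem)

lemma DA_isMatching : P.IsMatching P.DA := by
  intro s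
  by_contra! hc
  have hne : ({i | P.DA i = s} : Finset I).Nonempty := by
    rw [← card_pos]
    exact Nat.zero_lt_one.trans_le ((P.quota_pos s).trans hc.le)
  obtain ⟨i, hi, hworst⟩ := exists_max_image _ (P.prio s) hne
  have hbetter : ({j | P.DA j = s} : Finset I).erase i ⊆
      ({j | P.propose (P.daR (daRounds I S)) j = s ∧ P.prio s j < P.prio s i} : Finset I) := by
    intro j hj
    obtain ⟨hji, hj⟩ := mem_erase.1 hj
    refine mem_filter.2 ⟨mem_univ _, (mem_filter.1 hj).2, ?_⟩
    exact (hworst j hj).lt_of_ne fun h => hji (P.prio_inj s h)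
  have hrej : P.rejectsAt (P.daR (daRounds I S)) s i := by
    refine ⟨(mem_filter.1 hi).2, le_trans ?_ (card_le_card hbetter)⟩
    rw [card_erase_of_mem hi]
    omega
  exact (P.lt_daRounds_of_rejectsAt hrej).false

/-- The best `quota s` of these applicants are not rejected, so they apply to `s` again in the
next round. -/
lemma quota_le_card_prio_lt_succ {s : S} {c n : ℕ}
    (h : P.quota s ≤ #{j | P.propose (P.daR n) j = s ∧ P.prio s j < c}) :
    P.quota s ≤ #{j | P.propose (P.daR (n + 1)) j = s ∧ P.prio s j < c} := by
  set B : Finset I := {j | P.propose (P.daR n) j = s ∧ P.prio s j < c}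
  refine (le_card_filter_card_lt (P.prio_inj s).injOn h).trans (card_le_card fun j hj => ?_)
  obtain ⟨hjB, hjtop⟩ := mem_filter.1 hj
  obtain ⟨hjs, hjc⟩ := (mem_filter.1 hjB).2
  have hkept : ¬ P.rejectsAt (P.daR n) (P.propose (P.daR n) j) j := by
    rw [hjs]
    rintro ⟨-, hcard⟩
    refine (hcard.trans (card_le_card fun k hk => ?_)).not_gt hjtop
    obtain ⟨hks, hkj⟩ := (mem_filter.1 hk).2
    exact mem_filter.2 ⟨mem_filter.2 ⟨mem_univ _, hks, hkj.trans hjc⟩, hkj⟩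
  exact mem_filter.2 ⟨mem_univ _, (P.propose_daR_succ_of_not_rejectsAt hkept).trans hjs, hjc⟩

lemma quota_le_card_prio_lt_of_le {s : S} {c n m : ℕ} (hnm : n ≤ m)
    (h : P.quota s ≤ #{j | P.propose (P.daR n) j = s ∧ P.prio s j < c}) :
    P.quota s ≤ #{j | P.propose (P.daR m) j = s ∧ P.prio s j < c} := by
  induction m, hnm using Nat.le_induction with
  | base => exact h
  | succ m _ ih => exact P.quota_le_card_prio_lt_succ ih

lemma quota_le_card_DA_prio_lt {n : ℕ} {s : S} {i : I} (h : P.rejectsAt (P.daR n) s i) :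
    P.quota s ≤ #{j | P.DA j = s ∧ P.prio s j < P.prio s i} := by
  simpa only [P.propose_daR_eq_DA (le_max_right _ _)] using
    P.quota_le_card_prio_lt_of_le (le_max_left n (daRounds I S)) h.2

lemma filter_DA_prio_lt_subset (s : S) (c : ℕ) :
    ({j | P.DA j = s ∧ P.prio s j < c} : Finset I) ⊆ ({j | P.DA j = s} : Finset I) :=
  fun _ hj => mem_filter.2 ⟨mem_univ _, (mem_filter.1 hj).2.1⟩

lemma card_DA_eq_quota_of_rejectsAt {n : ℕ} {s : S} {i : I} (h : P.rejectsAt (P.daR n) s i) :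
    #{j | P.DA j = s} = P.quota s :=
  (P.DA_isMatching s).antisymm
    ((P.quota_le_card_DA_prio_lt h).trans (card_le_card (P.filter_DA_prio_lt_subset s _)))

lemma prio_lt_of_rejectsAt {n : ℕ} {s : S} {i j : I} (h : P.rejectsAt (P.daR n) s i)
    (hj : P.DA j = s) : P.prio s j < P.prio s i := by
  have heq := eq_of_subset_of_card_le (P.filter_DA_prio_lt_subset s _)
    ((P.DA_isMatching s).trans (P.quota_le_card_DA_prio_lt h))
  have hmem : j ∈ ({j | P.DA j = s} : Finset I) := mem_filter.2 ⟨mem_univ _, hj⟩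
  rw [← heq] at hmem
  exact (mem_filter.1 hmem).2.2

lemma exists_rejectsAt_of_rk_lt_rk_DA {s : S} {i : I} (h : P.rk i s < P.rk i (P.DA i)) :
    ∃ n, P.rejectsAt (P.daR n) s i := by
  have hmem : s ∈ P.daR (daRounds I S) i := by
    by_contra hs
    exact (P.rk_propose_le hs).not_gt h
  obtain ⟨n, -, hn⟩ := P.mem_daR_iff.1 hmem
  exact ⟨n, hn⟩

lemma DA_eq_of_forall_not_rejectsAt {n : ℕ} {s : S} {j : I} (hj : P.propose (P.daR n) j = s)
    (hkept : ∀ m ≥ n, ¬ P.rejectsAt (P.daR m) s j) : P.DA j = s := by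
  have hstays : ∀ m ≥ n, P.propose (P.daR m) j = s := fun m hm => by
    induction m, hm using Nat.le_induction with
    | base => exact hj
    | succ m hm ih =>
      exact (P.propose_daR_succ_of_not_rejectsAt (ih ▸ hkept m hm)).trans ih
  rw [← P.propose_daR_eq_DA (le_max_right n _), hstays _ (le_max_left _ _)]

lemma propose_daR_ne_DA_of_rejectsAt {n m : ℕ} {s : S} {i : I}
    (h : P.rejectsAt (P.daR n) s i) (hmn : m ≤ n) : P.propose (P.daR m) i ≠ P.DA i := by
  intro hDA
  have hs : s ∈ P.daR (daRounds I S) i :=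
    P.mem_daR_iff.2 ⟨n, P.lt_daRounds_of_rejectsAt h, h⟩
  have hrk : P.rk i s = P.rk i (P.DA i) := by
    refine le_antisymm (h.1 ▸ P.rk_propose_daR_mono i (P.lt_daRounds_of_rejectsAt h).le) ?_
    exact hDA ▸ h.1 ▸ P.rk_propose_daR_mono i hmn
  exact P.propose_daR_notMem _ i (P.rk_inj i hrk ▸ hs)

/-- When `s` rejects nobody after round `a`, its `quota s` best applicants of round `a` keep
their seats, so they are exactly the students `DA` assigns to `s`. -/
lemma propose_daR_eq_of_last_rejectsAt {a : ℕ} {s : S} {i j : I}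
    (hi : P.rejectsAt (P.daR a) s i)
    (hlast : ∀ m > a, ∀ k, ¬ P.rejectsAt (P.daR m) s k) (hj : P.DA j = s) :
    P.propose (P.daR a) j = s := by
  set A : Finset I := {k | P.propose (P.daR a) k = s}
  set T : Finset I := {k ∈ A | #{l ∈ A | P.prio s l < P.prio s k} < P.quota s}
  have hqA : P.quota s ≤ #A :=
    hi.2.trans (card_le_card fun k hk => mem_filter.2 ⟨mem_univ _, (mem_filter.1 hk).2.1⟩)
  have hT : T ⊆ ({k | P.DA k = s} : Finset I) := fun k hk => by
    obtain ⟨hkA, hktop⟩ := mem_filter.1 hk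
    refine mem_filter.2 ⟨mem_univ _, P.DA_eq_of_forall_not_rejectsAt (mem_filter.1 hkA).2 ?_⟩
    intro m hm hrej
    rcases hm.lt_or_eq with hm | rfl
    · exact hlast m hm k hrej
    · rw [filter_filter] at hktop
      exact hrej.2.not_gt hktop
  have hTeq := eq_of_subset_of_card_le hT
    ((P.DA_isMatching s).trans (le_card_filter_card_lt (P.prio_inj s).injOn hqA))
  have hjT : j ∈ T := hTeq ▸ mem_filter.2 ⟨mem_univ _, hj⟩
  exact (mem_filter.1 (mem_filter.1 hjT).1).2

lemma exists_rejectsAt_of_ne_DA {ν : I → S} (hν : P.StableDominating ν) {i : I}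
    (h : ν i ≠ P.DA i) : ∃ n, P.rejectsAt (P.daR n) (ν i) i :=
  P.exists_rejectsAt_of_rk_lt_rk_DA ((hν.2 i).lt_of_ne fun he => h (P.rk_inj i he))

/-- Every school that gains a student when passing from `DA` to `ν` is full under `DA`, so it
gains no more than it loses; as the totals agree, the school `z` leaves gains someone. -/
lemma exists_rejectsAt_DA_of_ne {ν : I → S} (hν : P.StableDominating ν) {z : I}
    (hz : ν z ≠ P.DA z) : ∃ n t, P.rejectsAt (P.daR n) (P.DA z) t := by
  by_contra! hnone
  set M : Finset I := {i | ν i ≠ P.DA i}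
  have hto : ∀ s, {i ∈ M | ν i = s} =
      ({i | ν i = s} : Finset I) \ ({i | P.DA i = s} : Finset I) := fun s => by ext i; grind
  have hfrom : ∀ s, {i ∈ M | P.DA i = s} =
      ({i | P.DA i = s} : Finset I) \ ({i | ν i = s} : Finset I) := fun s => by ext i; grind
  have hle : ∀ s, #{i ∈ M | ν i = s} ≤ #{i ∈ M | P.DA i = s} := fun s => by
    obtain hempty | ⟨t, ht⟩ := ({i ∈ M | ν i = s} : Finset I).eq_empty_or_nonempty
    · simp [hempty]
    obtain ⟨htM, rfl⟩ := mem_filter.1 ht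
    obtain ⟨n, hrej⟩ := P.exists_rejectsAt_of_ne_DA hν (mem_filter.1 htM).2
    rw [hto, hfrom]
    exact card_sdiff_le_card_sdiff_iff.2 ((hν.1 _).trans (P.card_DA_eq_quota_of_rejectsAt hrej).ge)
  have hlt : #{i ∈ M | ν i = P.DA z} < #{i ∈ M | P.DA i = P.DA z} := by
    rw [card_eq_zero.2 (filter_eq_empty_iff.2 fun t htM hts => ?_)]
    · exact card_pos.2 ⟨z, mem_filter.2 ⟨mem_filter.2 ⟨mem_univ _, hz⟩, rfl⟩⟩
    obtain ⟨n, hrej⟩ := P.exists_rejectsAt_of_ne_DA hν (mem_filter.1 htM).2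
    exact hnone n t (hts ▸ hrej)
  have := sum_lt_sum (fun s _ => hle s) ⟨P.DA z, mem_univ _, hlt⟩
  rw [← card_eq_sum_card_fiberwise fun i _ => mem_univ (ν i),
    ← card_eq_sum_card_fiberwise fun i _ => mem_univ (P.DA i)] at this
  exact this.false

lemma exists_last_rejectsAt {n : ℕ} {s : S} {i : I} (h : P.rejectsAt (P.daR n) s i) :
    ∃ a j, P.rejectsAt (P.daR a) s j ∧ ∀ m > a, ∀ k, ¬ P.rejectsAt (P.daR m) s k := by
  obtain ⟨j, hj⟩ := Nat.findGreatest_spec (P := fun n => ∃ j, P.rejectsAt (P.daR n) s j)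
    (P.lt_daRounds_of_rejectsAt h).le ⟨i, h⟩
  exact ⟨_, j, hj, fun m hm k hk =>
    hm.not_ge (Nat.le_findGreatest (P.lt_daRounds_of_rejectsAt hk).le ⟨k, hk⟩)⟩

noncomputable def lastRejection (i : I) : ℕ :=
  Nat.findGreatest (fun n => ∃ s, P.rejectsAt (P.daR n) s i) (daRounds I S)

lemma le_lastRejection {n : ℕ} {s : S} {i : I} (h : P.rejectsAt (P.daR n) s i) :
    n ≤ P.lastRejection i :=
  Nat.le_findGreatest (P.lt_daRounds_of_rejectsAt h).le ⟨s, h⟩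

lemma exists_rejectsAt_lastRejection {n : ℕ} {s : S} {i : I} (h : P.rejectsAt (P.daR n) s i) :
    ∃ s', P.rejectsAt (P.daR (P.lastRejection i)) s' i :=
  Nat.findGreatest_spec (P := fun n => ∃ s, P.rejectsAt (P.daR n) s i)
    (P.lt_daRounds_of_rejectsAt h).le ⟨s, h⟩

end SchoolChoice

theorem exists_unimprovable_marginalized_general {I S : Type} [Fintype I] [Fintype S]
    [DecidableEq I] [DecidableEq S] (P : SchoolChoice I S)
    (Y Z : Finset I) (hZ : Z.Nonempty)
    (hcover : Y ∪ Z = Finset.univ)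
    (hprio : ∀ s : S, ∀ y ∈ Y, ∀ z ∈ Z, P.prio s y < P.prio s z) :
    ∃ z ∈ Z, P.Unimprovable z := by
  obtain ⟨z, hzZ, hzmax⟩ := Z.exists_max_image P.lastRejection hZ
  refine ⟨z, hzZ, fun ν hν => by_contra fun hmoved => ?_⟩
  obtain ⟨n, t, ht⟩ := P.exists_rejectsAt_DA_of_ne hν hmoved
  obtain ⟨a, w, hw, hlast⟩ := P.exists_last_rejectsAt ht
  have hwZ : w ∈ Z := by
    have hzw := P.prio_lt_of_rejectsAt hw rfl
    rcases Finset.mem_union.1 (hcover ▸ Finset.mem_univ w) with hwY | hwZ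
    · exact absurd (hprio _ w hwY z hzZ) hzw.asymm
    · exact hwZ
  obtain ⟨n', hz⟩ := P.exists_rejectsAt_of_ne_DA hν hmoved
  obtain ⟨s, hzlast⟩ := P.exists_rejectsAt_lastRejection hz
  exact P.propose_daR_ne_DA_of_rejectsAt hzlast ((P.le_lastRejection hw).trans (hzmax w hwZ))
    (P.propose_daR_eq_of_last_rejectsAt hw hlast rfl)

/-- In any school choice problem whose students are partitioned
into nonempty sets `Y` (advantaged) and `Z` (marginalized), with every
advantaged student having higher priority than every marginalized student at
every school, there is at least one marginalized student who is unimprovable. -/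
theorem exists_unimprovable_marginalized {I S : Type} [Fintype I] [Fintype S]
    [DecidableEq I] [DecidableEq S] (P : SchoolChoice I S)
    (Y Z : Finset I) (hY : Y.Nonempty) (hZ : Z.Nonempty)
    (hdisj : Disjoint Y Z) (hcover : Y ∪ Z = Finset.univ)
    (hprio : ∀ s : S, ∀ y ∈ Y, ∀ z ∈ Z, P.prio s y < P.prio s z) :
    ∃ z ∈ Z, P.Unimprovable z :=
  exists_unimprovable_marginalized_general P Y Z hZ hcover hprio
end

section
/- Preservation of full segregation: for any school choice problem with advantaged and marginalized students and any stable-dominating matching ν, if a school s is fully segregated under DA(P) (i.e., DA⁻¹_s(P) ⊆ Y or DA⁻¹_s(P) ⊆ Z), then s is fully segregated under ν, admitting the same type of students (ν⁻¹(s) ⊆ Y or ν⁻¹(s) ⊆ Z, respectively). -/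
section Aux

open Finset
open scoped Classical

namespace SchoolChoice

variable {I S : Type} [Fintype I] [Fintype S] [DecidableEq I] [DecidableEq S]

lemma propose_mem (P : SchoolChoice I S) (R : I → Finset S) (i : I)
    (hne : (Finset.univ \ R i).Nonempty) : P.propose R i ∈ Finset.univ \ R i := by
  unfold propose
  rw [dif_pos hne]
  exact (Finset.exists_min_image _ (P.rk i) hne).choose_spec.1

lemma propose_min (P : SchoolChoice I S) (R : I → Finset S) (i : I) {t : S}
    (ht : t ∉ R i) : P.rk i (P.propose R i) ≤ P.rk i t := by
  have hne : (Finset.univ \ R i).Nonempty := ⟨t, by simp [ht]⟩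
  unfold propose
  rw [dif_pos hne]
  exact (Finset.exists_min_image _ (P.rk i) hne).choose_spec.2 t (by simp [ht])

lemma subset_stepR (P : SchoolChoice I S) (R : I → Finset S) (i : I) :
    R i ⊆ P.stepR R i := Finset.subset_union_left

lemma propose_step (P : SchoolChoice I S) (R : I → Finset S) {s : S} {j : I}
    (hjs : P.propose R j = s) (hnr : ¬ P.rejectsAt R s j) :
    P.propose (P.stepR R) j = s := by
  by_cases hne : (Finset.univ \ R j).Nonempty
  · have hmem := P.propose_mem R j hne
    rw [hjs] at hmem
    have hsR : s ∉ R j := (Finset.mem_sdiff.mp hmem).2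
    have hs2 : s ∉ P.stepR R j := by
      intro hmem2
      rcases Finset.mem_union.mp hmem2 with h | h
      · exact hsR h
      · exact hnr (Finset.mem_filter.mp h).2
    have hne2 : (Finset.univ \ P.stepR R j).Nonempty :=
      ⟨s, Finset.mem_sdiff.mpr ⟨Finset.mem_univ s, hs2⟩⟩
    have hmem2 := P.propose_mem (P.stepR R) j hne2
    apply P.rk_inj j
    apply le_antisymm
    · exact P.propose_min (P.stepR R) j hs2
    · rw [← hjs]
      exact P.propose_min R j fun h =>
        (Finset.mem_sdiff.mp hmem2).2 (P.subset_stepR R j h)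
  · have hne2 : ¬ (Finset.univ \ P.stepR R j).Nonempty := by
      intro ⟨t, ht⟩
      exact hne ⟨t, Finset.mem_sdiff.mpr ⟨Finset.mem_univ t,
        fun h => (Finset.mem_sdiff.mp ht).2 (P.subset_stepR R j h)⟩⟩
    unfold propose at hjs ⊢
    rw [dif_neg hne] at hjs
    rw [dif_neg hne2]
    exact hjs

/-- The top-`q` counting lemma. -/
lemma held_card {A : Finset I} {f : I → ℕ} (hf : Function.Injective f)
    {q : ℕ} (hq : q ≤ A.card) :
    (A.filter fun j => (A.filter fun k => f k < f j).card < q).card = q := by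
  set g : I → ℕ := fun j => (A.filter fun k => f k < f j).card with hg
  have hmono : ∀ j ∈ A, ∀ j' ∈ A, f j < f j' → g j < g j' := by
    intro j hj j' hj' hlt
    apply Finset.card_lt_card
    constructor
    · intro k hk
      simp only [Finset.mem_filter] at hk ⊢
      exact ⟨hk.1, hk.2.trans hlt⟩
    · intro hsub
      have : j ∈ A.filter fun k => f k < f j :=
        hsub (Finset.mem_filter.mpr ⟨hj, hlt⟩)
      simp at this
  have hinj : Set.InjOn g A := by
    intro j hj j' hj' hgeq
    by_contra hne
    have hfne : f j ≠ f j' := fun h => hne (hf h)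
    rcases lt_or_gt_of_ne hfne with h | h
    · exact absurd hgeq (Nat.ne_of_lt (hmono j hj j' hj' h))
    · exact absurd hgeq.symm (Nat.ne_of_lt (hmono j' hj' j hj h))
  have himage : A.image g = Finset.range A.card := by
    apply Finset.eq_of_subset_of_card_le
    · intro x hx
      simp only [Finset.mem_image] at hx
      obtain ⟨j, hj, rfl⟩ := hx
      simp only [Finset.mem_range]
      calc g j ≤ (A.erase j).card := Finset.card_le_card (by
              intro k hk
              simp only [Finset.mem_filter] at hk
              exact Finset.mem_erase.mpr
                ⟨fun h => by subst h; exact lt_irrefl _ hk.2, hk.1⟩)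
        _ < A.card := Finset.card_erase_lt_of_mem hj
    · rw [Finset.card_range, Finset.card_image_of_injOn hinj]
  have h1 : ((A.filter fun j => g j < q).image g).card
      = (A.filter fun j => g j < q).card :=
    Finset.card_image_of_injOn (hinj.mono (by
      intro x hx; exact (Finset.mem_filter.mp hx).1))
  have h2 : (A.filter fun j => g j < q).image g
      = (A.image g).filter (fun x => x < q) :=
    (Finset.filter_image (f := g) (s := A) (p := fun x => x < q)).symm
  have h3 : ((Finset.range A.card).filter fun x => x < q) = Finset.range q := by
    ext x
    simp only [Finset.mem_filter, Finset.mem_range]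
    exact ⟨fun h => h.2, fun h => ⟨lt_of_lt_of_le h hq, h⟩⟩
  calc (A.filter fun j => g j < q).card
      = ((A.filter fun j => g j < q).image g).card := h1.symm
    _ = ((A.image g).filter fun x => x < q).card := by rw [h2]
    _ = q := by rw [himage, h3, Finset.card_range]

lemma step_invariant (P : SchoolChoice I S) (R : I → Finset S) (s : S) (i : I)
    (h : P.quota s ≤ (Finset.univ.filter fun j =>
        P.propose R j = s ∧ P.prio s j < P.prio s i).card) :
    P.quota s ≤ (Finset.univ.filter fun j =>
        P.propose (P.stepR R) j = s ∧ P.prio s j < P.prio s i).card := by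
  classical
  set q := P.quota s with hq
  set A := Finset.univ.filter fun j => P.propose R j = s with hA
  have hAsub : (Finset.univ.filter fun j =>
      P.propose R j = s ∧ P.prio s j < P.prio s i) ⊆ A := by
    intro j hj
    simp only [Finset.mem_filter] at hj
    rw [hA, Finset.mem_filter]
    exact ⟨hj.1, hj.2.1⟩
  have hAcard : q ≤ A.card := le_trans h (Finset.card_le_card hAsub)
  set held := A.filter fun j => (A.filter fun k => P.prio s k < P.prio s j).card < q
    with hheld_def
  have hheld : held.card = q := by
    rw [hheld_def]
    exact held_card (P.prio_inj s) hAcard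
  -- each member of held is not rejected and has priority above i
  have hkey : ∀ j ∈ held,
      P.propose (P.stepR R) j = s ∧ P.prio s j < P.prio s i := by
    intro j hj
    rw [hheld_def, Finset.mem_filter] at hj
    obtain ⟨hjA, hjcnt⟩ := hj
    rw [hA, Finset.mem_filter] at hjA
    have hprop : P.propose R j = s := hjA.2
    have hcnt_eq : (A.filter fun k => P.prio s k < P.prio s j)
        = Finset.univ.filter fun k => P.propose R k = s ∧ P.prio s k < P.prio s j := by
      rw [hA, Finset.filter_filter]
    have hnr : ¬ P.rejectsAt R s j := by
      intro hrej
      rw [rejectsAt] at hrej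
      rw [hcnt_eq] at hjcnt
      exact absurd hrej.2 (not_le.mpr hjcnt)
    refine ⟨P.propose_step R hprop hnr, ?_⟩
    by_contra hge
    push_neg at hge
    -- then every member of the hypothesis set beats j, so j would be rejected
    apply hnr
    refine ⟨hprop, ?_⟩
    calc q ≤ (Finset.univ.filter fun k =>
          P.propose R k = s ∧ P.prio s k < P.prio s i).card := h
      _ ≤ (Finset.univ.filter fun k =>
          P.propose R k = s ∧ P.prio s k < P.prio s j).card := by
          apply Finset.card_le_card
          intro k hk
          simp only [Finset.mem_filter] at hk ⊢
          exact ⟨hk.1, hk.2.1, lt_of_lt_of_le hk.2.2 hge⟩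
  have hsub2 : held ⊆ Finset.univ.filter fun j =>
      P.propose (P.stepR R) j = s ∧ P.prio s j < P.prio s i := by
    intro j hj
    exact Finset.mem_filter.mpr ⟨Finset.mem_univ j, hkey j hj⟩
  calc q = held.card := hheld.symm
    _ ≤ _ := Finset.card_le_card hsub2

lemma daR_fixed (P : SchoolChoice I S) :
    P.stepR (P.daR (Fintype.card I * Fintype.card S + 1))
      = P.daR (Fintype.card I * Fintype.card S + 1) := by
  classical
  set K := Fintype.card I * Fintype.card S with hK
  set c : ℕ → ℕ := fun n => ∑ i : I, (P.daR n i).card with hc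
  have hstep : ∀ n, P.daR (n+1) ≠ P.daR n → c n < c (n+1) := by
    intro n hne
    have : ∃ i, P.daR n i ≠ P.daR (n+1) i := by
      by_contra hall
      push_neg at hall
      exact hne (funext fun i => (hall i).symm)
    obtain ⟨i, hi⟩ := this
    apply Finset.sum_lt_sum
    · intro j _
      exact Finset.card_le_card (P.subset_stepR (P.daR n) j)
    · exact ⟨i, Finset.mem_univ i,
        Finset.card_lt_card (lt_of_le_of_ne (P.subset_stepR (P.daR n) i) hi)⟩
  have hbound : ∀ n, c n ≤ K := by
    intro n
    calc c n ≤ ∑ _i : I, Fintype.card S :=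
          Finset.sum_le_sum fun i _ => Finset.card_le_univ _
      _ = K := by rw [Finset.sum_const, Finset.card_univ, smul_eq_mul, hK]
  have hfind : ∃ n ≤ K, P.daR (n+1) = P.daR n := by
    by_contra hnone
    push_neg at hnone
    have hgrow : ∀ n, n ≤ K + 1 → n ≤ c n := by
      intro n
      induction n with
      | zero => intro _; exact Nat.zero_le _
      | succ m ih =>
        intro hm
        have h1 : m ≤ c m := ih (Nat.le_of_succ_le hm)
        have h2 : c m < c (m+1) := hstep m (hnone m (Nat.lt_succ_iff.mp hm))
        omega
    have := hgrow (K+1) le_rfl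
    have := hbound (K+1)
    omega
  obtain ⟨n, hn, hfix⟩ := hfind
  have hconst : ∀ m, P.daR (n + m) = P.daR n := by
    intro m
    induction m with
    | zero => rfl
    | succ k ih =>
      show P.stepR (P.daR (n + k)) = P.daR n
      rw [ih]
      exact hfix
  have h1 : P.daR (K + 1) = P.daR n := by
    have : K + 1 = n + (K + 1 - n) := by omega
    rw [this, hconst]
  show P.stepR (P.daR (K+1)) = P.daR (K+1)
  rw [h1]
  show P.stepR (P.daR n) = P.daR n
  exact hfix

lemma rejected_mem (P : SchoolChoice I S) {n : ℕ} {i : I} {s : S}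
    (hs : s ∈ P.daR n i) :
    ∃ m < n, s ∉ P.daR m i ∧ P.rejectsAt (P.daR m) s i := by
  induction n with
  | zero => simp [daR] at hs
  | succ k ih =>
    by_cases hk : s ∈ P.daR k i
    · obtain ⟨m, hm, h1, h2⟩ := ih hk
      exact ⟨m, Nat.lt_succ_of_lt hm, h1, h2⟩
    · refine ⟨k, Nat.lt_succ_self k, hk, ?_⟩
      rcases Finset.mem_union.mp hs with h | h
      · exact absurd h hk
      · exact (Finset.mem_filter.mp h).2

/-- KEY LEMMA: if `i` desires `s` under DA, then `s` is filled to quota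
and every DA occupant of `s` has higher priority than `i`. -/
lemma key (P : SchoolChoice I S) (i : I) (s : S)
    (hdes : P.rk i s < P.rk i (P.DA i)) :
    (Finset.univ.filter fun j => P.DA j = s).card = P.quota s ∧
      ∀ j, P.DA j = s → P.prio s j < P.prio s i := by
  classical
  set N := Fintype.card I * Fintype.card S + 1 with hN
  set R := P.daR N with hR
  have hfix : P.stepR R = R := P.daR_fixed
  have hDA : P.DA = P.propose R := rfl
  -- s must have been rejected
  have hsR : s ∈ R i := by
    by_contra hs
    exact absurd (P.propose_min R i hs) (not_le.mpr hdes)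
  obtain ⟨m, hm, _, hrej⟩ := P.rejected_mem hsR
  have hinv : ∀ k, P.quota s ≤ (Finset.univ.filter fun j =>
      P.propose (P.daR (m + k)) j = s ∧ P.prio s j < P.prio s i).card := by
    intro k
    induction k with
    | zero => exact hrej.2
    | succ l ih =>
      have : P.daR (m + (l+1)) = P.stepR (P.daR (m + l)) := rfl
      rw [this]
      exact P.step_invariant (P.daR (m+l)) s i ih
  have hinvN : P.quota s ≤ (Finset.univ.filter fun j =>
      P.propose R j = s ∧ P.prio s j < P.prio s i).card := by
    have hmk : m + (N - m) = N := by omega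
    have := hinv (N - m)
    rwa [hmk] at this
  -- upper bound: at the fixed point at most quota students are matched to s
  set B := Finset.univ.filter fun j => P.DA j = s with hB
  have hBle : B.card ≤ P.quota s := by
    by_contra hgt
    push_neg at hgt
    have hBne : B.Nonempty := Finset.card_pos.mp (lt_of_le_of_lt (Nat.zero_le _) hgt)
    obtain ⟨j, hjB, hjmax⟩ := Finset.exists_max_image B (P.prio s) hBne
    have hjs : P.DA j = s := (Finset.mem_filter.mp hjB).2
    have hsubfil : B.erase j ⊆ Finset.univ.filter fun k =>
        P.propose R k = s ∧ P.prio s k < P.prio s j := by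
      intro k hk
      obtain ⟨hkj, hkB⟩ := Finset.mem_erase.mp hk
      have hks : P.DA k = s := (Finset.mem_filter.mp hkB).2
      refine Finset.mem_filter.mpr ⟨Finset.mem_univ k, hks, ?_⟩
      exact lt_of_le_of_ne (hjmax k hkB) fun h => hkj (P.prio_inj s h)
    have hrej2 : P.rejectsAt R s j := by
      refine ⟨hjs, ?_⟩
      calc P.quota s ≤ B.card - 1 := by omega
        _ = (B.erase j).card := (Finset.card_erase_of_mem hjB).symm
        _ ≤ _ := Finset.card_le_card hsubfil
    have hsRj : s ∈ R j := by
      rw [← hfix]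
      exact Finset.mem_union_right _ (Finset.mem_filter.mpr ⟨Finset.mem_univ s, hrej2⟩)
    by_cases hne : (Finset.univ \ R j).Nonempty
    · have hmem := P.propose_mem R j hne
      rw [hDA] at hjs
      rw [hjs] at hmem
      exact (Finset.mem_sdiff.mp hmem).2 hsRj
    · have : P.propose R j = P.nullSchool := by
        unfold propose; rw [dif_neg hne]
      have hsnull : s = P.nullSchool := by rw [← hjs, hDA, this]
      have : P.quota s = Fintype.card I := by rw [hsnull]; exact P.quota_null
      have hle : B.card ≤ Fintype.card I := by
        calc B.card ≤ Finset.univ.card := Finset.card_le_univ B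
          _ = Fintype.card I := Finset.card_univ
      omega
  -- the filter in hinvN is a subset of B
  have hsubB : (Finset.univ.filter fun j =>
      P.propose R j = s ∧ P.prio s j < P.prio s i) ⊆ B := by
    intro j hj
    simp only [Finset.mem_filter] at hj
    exact Finset.mem_filter.mpr ⟨Finset.mem_univ j, hj.2.1⟩
  have hEq : (Finset.univ.filter fun j =>
      P.propose R j = s ∧ P.prio s j < P.prio s i) = B := by
    apply Finset.eq_of_subset_of_card_le hsubB
    calc B.card ≤ P.quota s := hBle
      _ ≤ _ := hinvN
  constructor
  · have h1 : P.quota s ≤ B.card := le_trans hinvN (Finset.card_le_card hsubB)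
    omega
  · intro j hjs
    have : j ∈ B := Finset.mem_filter.mpr ⟨Finset.mem_univ j, hjs⟩
    rw [← hEq] at this
    exact (Finset.mem_filter.mp this).2.2

end SchoolChoice

end Aux

/-- Preservation of full segregation: for any stable-dominating
matching `ν`, if a school `s` is fully segregated under `DA(P)` (admitting
only advantaged, respectively only marginalized, students), then `s` is fully
segregated under `ν`, admitting the same type of students. -/
theorem segregation_preservation {I S : Type} [Fintype I] [Fintype S]
    [DecidableEq I] [DecidableEq S] (P : SchoolChoice I S)
    (Y Z : Finset I) (hY : Y.Nonempty) (hZ : Z.Nonempty)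
    (hdisj : Disjoint Y Z) (hcover : Y ∪ Z = Finset.univ)
    (hprio : ∀ s : S, ∀ y ∈ Y, ∀ z ∈ Z, P.prio s y < P.prio s z)
    (ν : I → S) (hν : P.StableDominating ν) (s : S) :
    ((∀ i : I, P.DA i = s → i ∈ Y) → ∀ i : I, ν i = s → i ∈ Y) ∧
      ((∀ i : I, P.DA i = s → i ∈ Z) → ∀ i : I, ν i = s → i ∈ Z) := by
  classical
  obtain ⟨hmatch, hdom⟩ := hν
  have hYZ : ∀ i : I, i ∉ Y → i ∈ Z := by
    intro i hi
    have : i ∈ Y ∪ Z := hcover ▸ Finset.mem_univ i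
    rcases Finset.mem_union.mp this with h | h
    · exact absurd h hi
    · exact h
  have hZY : ∀ i : I, i ∉ Z → i ∈ Y := by
    intro i hi
    have : i ∈ Y ∪ Z := hcover ▸ Finset.mem_univ i
    rcases Finset.mem_union.mp this with h | h
    · exact h
    · exact absurd h hi
  have hkey : ∀ i : I, ν i ≠ P.DA i →
      (Finset.univ.filter fun j => P.DA j = ν i).card = P.quota (ν i) ∧
        ∀ j, P.DA j = ν i → P.prio (ν i) j < P.prio (ν i) i := by
    intro i hne
    apply P.key
    exact lt_of_le_of_ne (hdom i) fun h => hne (P.rk_inj i h)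
  have hle : ∀ t : S, (Finset.univ.filter fun i => ν i = t).card ≤
      (Finset.univ.filter fun i => P.DA i = t).card := by
    intro t
    by_cases hmover : ∃ i, ν i = t ∧ ν i ≠ P.DA i
    · obtain ⟨i, hit, hne⟩ := hmover
      have h1 := (hkey i hne).1
      rw [hit] at h1
      calc (Finset.univ.filter fun i => ν i = t).card ≤ P.quota t := hmatch t
        _ = _ := h1.symm
    · push_neg at hmover
      apply Finset.card_le_card
      intro j hj
      have hjt : ν j = t := (Finset.mem_filter.mp hj).2
      have hDAj : P.DA j = t := by rw [← hmover j hjt]; exact hjt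
      exact Finset.mem_filter.mpr ⟨Finset.mem_univ j, hDAj⟩
  have hsum : (∑ t : S, (Finset.univ.filter fun i => ν i = t).card)
      = ∑ t : S, (Finset.univ.filter fun i => P.DA i = t).card := by
    rw [← Finset.card_eq_sum_card_fiberwise (fun i (_ : i ∈ Finset.univ) => Finset.mem_univ (ν i)),
        ← Finset.card_eq_sum_card_fiberwise (fun i (_ : i ∈ Finset.univ) => Finset.mem_univ (P.DA i))]
  have hcard : ∀ t : S, (Finset.univ.filter fun i => ν i = t).card =
      (Finset.univ.filter fun i => P.DA i = t).card := by
    intro t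
    by_contra hne
    have hlt := lt_of_le_of_ne (hle t) hne
    have := Finset.sum_lt_sum (fun u (_ : u ∈ Finset.univ) => hle u)
      ⟨t, Finset.mem_univ t, hlt⟩
    omega
  constructor
  · intro hallY i his
    have hYfull : ∀ t : S, (∀ j, P.DA j = t → j ∈ Y) →
        (Y.filter fun i => P.DA i = t) = Finset.univ.filter fun i => P.DA i = t := by
      intro t ht
      ext j
      simp only [Finset.mem_filter, Finset.mem_univ, true_and]
      exact ⟨fun h => h.2, fun h => ⟨ht j h, h⟩⟩
    have hptle : ∀ t : S, (Y.filter fun i => ν i = t).card ≤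
        (Y.filter fun i => P.DA i = t).card := by
      intro t
      by_cases ht : ∀ j, P.DA j = t → j ∈ Y
      · calc (Y.filter fun i => ν i = t).card
            ≤ (Finset.univ.filter fun i => ν i = t).card :=
              Finset.card_le_card (fun j hj => Finset.mem_filter.mpr
                ⟨Finset.mem_univ j, (Finset.mem_filter.mp hj).2⟩)
          _ = (Finset.univ.filter fun i => P.DA i = t).card := hcard t
          _ = (Y.filter fun i => P.DA i = t).card := by rw [hYfull t ht]
      · apply Finset.card_le_card
        intro j hj
        obtain ⟨hjY, hjt⟩ := Finset.mem_filter.mp hj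
        refine Finset.mem_filter.mpr ⟨hjY, ?_⟩
        by_contra hDAj
        have hne : ν j ≠ P.DA j := fun h => hDAj (by rw [← h]; exact hjt)
        have h2 := (hkey j hne).2
        rw [hjt] at h2
        apply ht
        intro k hk
        have hklt := h2 k hk
        by_contra hkY
        have hkZ := hYZ k hkY
        have := hprio t j hjY k hkZ
        omega
    have hsumY : (∑ t : S, (Y.filter fun i => ν i = t).card)
        = ∑ t : S, (Y.filter fun i => P.DA i = t).card := by
      rw [← Finset.card_eq_sum_card_fiberwise (fun i (_ : i ∈ Y) => Finset.mem_univ (ν i)),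
          ← Finset.card_eq_sum_card_fiberwise (fun i (_ : i ∈ Y) => Finset.mem_univ (P.DA i))]
    have heqs : (Y.filter fun i => ν i = s).card
        = (Y.filter fun i => P.DA i = s).card := by
      by_contra hne
      have := Finset.sum_lt_sum (fun u (_ : u ∈ Finset.univ) => hptle u)
        ⟨s, Finset.mem_univ s, lt_of_le_of_ne (hptle s) hne⟩
      omega
    have hfin : (Y.filter fun i => ν i = s) = Finset.univ.filter fun i => ν i = s := by
      apply Finset.eq_of_subset_of_card_le
      · intro j hj
        exact Finset.mem_filter.mpr ⟨Finset.mem_univ j, (Finset.mem_filter.mp hj).2⟩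
      · apply le_of_eq
        calc (Finset.univ.filter fun i => ν i = s).card
            = (Finset.univ.filter fun i => P.DA i = s).card := hcard s
          _ = (Y.filter fun i => P.DA i = s).card := by rw [hYfull s hallY]
          _ = (Y.filter fun i => ν i = s).card := heqs.symm
    have : i ∈ Y.filter fun i => ν i = s := by
      rw [hfin]
      exact Finset.mem_filter.mpr ⟨Finset.mem_univ i, his⟩
    exact (Finset.mem_filter.mp this).1
  · intro hallZ i his
    by_cases hDAi : P.DA i = s
    · exact hallZ i hDAi
    · have hne : ν i ≠ P.DA i := fun h => hDAi (by rw [← h]; exact his)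
      obtain ⟨h1, h2⟩ := hkey i hne
      rw [his] at h1 h2
      have hqs : 1 ≤ P.quota s := P.quota_pos s
      have hpos : 0 < (Finset.univ.filter fun j => P.DA j = s).card := by omega
      obtain ⟨j, hj⟩ := Finset.card_pos.mp hpos
      have hjs : P.DA j = s := (Finset.mem_filter.mp hj).2
      have hjZ : j ∈ Z := hallZ j hjs
      by_contra hiZ
      have hiY : i ∈ Y := hZY i hiZ
      have ha := hprio s i hiY j hjZ
      have hb := h2 j hjs
      omega
end
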